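/- Let a, b, c be points in ℝ^{d+1} lying on the paraboloid {x : x_{d+1} = x_1² + ⋯ + x_d²}, with ā = (a_1,…,a_d) ≠ 0, where x̄ denotes the first d coordinates of x. Then a·b = a·c (dot product in ℝ^{d+1}) if and only if |(-ā)/(2|ā|²) - b̄| = |(-ā)/(2|ā|²) - c̄| (Euclidean distance in ℝ^d). -/

import Mathlib

/-! Write `ā, b̄` for the horizontal parts and `p = -ā / (2|ā|²)`. Expanding the square,
`|ā|² |p - b̄|² = 1/4 + ⟨ā, b̄⟩ + |ā|² |b̄|²`, and on the paraboloid the last two terms are exactly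
`a·b`. So `|p - b̄|²` is a strictly increasing affine function of `a·b`. -/

open scoped InnerProductSpace

/-- Projection of a point of `ℝ^{d+1}` onto its first `d` coordinates. -/
noncomputable def projBase (d : ℕ) (x : EuclideanSpace ℝ (Fin (d + 1))) :
    EuclideanSpace ℝ (Fin d) := WithLp.toLp 2 (fun i : Fin d => x i.castSucc)

lemma inner_eq_inner_projBase_add (d : ℕ) (a b : EuclideanSpace ℝ (Fin (d + 1))) :
    ⟪a, b⟫_ℝ = ⟪projBase d a, projBase d b⟫_ℝ + a (Fin.last d) * b (Fin.last d) := by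
  simp [PiLp.inner_apply, Fin.sum_univ_castSucc, projBase, RCLike.inner_apply, mul_comm]

lemma inner_eq_of_mem_paraboloid {d : ℕ} {a b : EuclideanSpace ℝ (Fin (d + 1))}
    (ha : a (Fin.last d) = ‖projBase d a‖ ^ 2) (hb : b (Fin.last d) = ‖projBase d b‖ ^ 2) :
    ⟪a, b⟫_ℝ = ⟪projBase d a, projBase d b⟫_ℝ + ‖projBase d a‖ ^ 2 * ‖projBase d b‖ ^ 2 := by
  rw [inner_eq_inner_projBase_add, ha, hb]

lemma sq_norm_mul_sq_norm_neg_smul_sub {E : Type*} [NormedAddCommGroup E]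
    [InnerProductSpace ℝ E] {u : E} (hu : u ≠ 0) (v : E) :
    ‖u‖ ^ 2 * ‖(-(1 / (2 * ‖u‖ ^ 2))) • u - v‖ ^ 2 = 1 / 4 + ⟪u, v⟫_ℝ + ‖u‖ ^ 2 * ‖v‖ ^ 2 := by
  have hu' : ‖u‖ ≠ 0 := norm_ne_zero_iff.mpr hu
  rw [norm_sub_sq_real, norm_smul, real_inner_smul_left, Real.norm_eq_abs, mul_pow, sq_abs]
  field_simp
  ring

/-- If `a, b, c` lie on the paraboloid `x_{d+1} = x_1² + ⋯ + x_d²` and `ā ≠ 0`, then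
`a·b = a·c` iff `|(-ā)/(2|ā|²) - b̄| = |(-ā)/(2|ā|²) - c̄|`. -/
theorem dot_eq_iff_isosceles (d : ℕ) (a b c : EuclideanSpace ℝ (Fin (d + 1)))
    (ha : a (Fin.last d) = ‖projBase d a‖ ^ 2)
    (hb : b (Fin.last d) = ‖projBase d b‖ ^ 2)
    (hc : c (Fin.last d) = ‖projBase d c‖ ^ 2)
    (ha0 : projBase d a ≠ 0) :
    ⟪a, b⟫_ℝ = ⟪a, c⟫_ℝ ↔
      ‖(-(1 / (2 * ‖projBase d a‖ ^ 2))) • projBase d a - projBase d b‖ =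
        ‖(-(1 / (2 * ‖projBase d a‖ ^ 2))) • projBase d a - projBase d c‖ := by
  have hpos : 0 < ‖projBase d a‖ ^ 2 := by positivity
  rw [iff_comm, ← sq_eq_sq₀ (norm_nonneg _) (norm_nonneg _), ← mul_right_inj' hpos.ne',
    sq_norm_mul_sq_norm_neg_smul_sub ha0, sq_norm_mul_sq_norm_neg_smul_sub ha0,
    inner_eq_of_mem_paraboloid ha hb, inner_eq_of_mem_paraboloid ha hc, add_assoc, add_assoc,
    add_right_inj]
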